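/- Let λ, σ > 0, let h : [0,∞) → ℝ be continuously differentiable, and let a : [0,∞) → ℝ be differentiable with a'(t) = -(λ/2) a(t) + h'(t). Define f(x) = sgn(x)·σ²x²/4 and r(t) = f(a(t)). Then r is differentiable and satisfies r'(t) = -λ r(t) + σ·√(|r(t)|) · h'(t). -/

import Mathlib

lemma sign_mul_sq (x : ℝ) : Real.sign x * x ^ 2 = x * |x| := by
  rcases lt_trichotomy x 0 with h | h | h
  · rw [Real.sign_of_neg h, abs_of_neg h]; ring
  · simp [h]
  · rw [Real.sign_of_pos h, abs_of_pos h]; ring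

lemma hasDerivAt_mul_abs (x : ℝ) :
    HasDerivAt (fun y : ℝ => y * |y|) (2 * |x|) x := by
  rcases lt_trichotomy x 0 with h | h | h
  · have h1 : HasDerivAt (fun y : ℝ => -(y ^ 2)) (2 * |x|) x := by
      have := (hasDerivAt_pow 2 x).neg
      refine this.congr_deriv ?_
      rw [abs_of_neg h]; push_cast; ring
    apply h1.congr_of_eventuallyEq
    filter_upwards [Iio_mem_nhds h] with y hy
    rw [abs_of_neg hy]; ring
  · subst h
    simp only [abs_zero, mul_zero]
    rw [hasDerivAt_iff_tendsto_slope]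
    have : ∀ y ∈ ({(0:ℝ)}ᶜ : Set ℝ), |y| = slope (fun y : ℝ => y * |y|) 0 y := by
      intro y hy
      simp only [Set.mem_compl_iff, Set.mem_singleton_iff] at hy
      rw [slope_def_field]
      field_simp
      simp
    have h2 : Filter.Tendsto (fun y : ℝ => |y|) (nhdsWithin 0 {(0:ℝ)}ᶜ) (nhds 0) := by
      have : Filter.Tendsto (fun y : ℝ => |y|) (nhds 0) (nhds 0) := by
        simpa using continuous_abs.tendsto (0:ℝ)
      exact this.mono_left nhdsWithin_le_nhds
    exact h2.congr' (Filter.eventuallyEq_of_mem self_mem_nhdsWithin this)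
  · have h1 : HasDerivAt (fun y : ℝ => y ^ 2) (2 * |x|) x := by
      have := hasDerivAt_pow 2 x
      refine this.congr_deriv ?_
      rw [abs_of_pos h]; push_cast; ring
    apply h1.congr_of_eventuallyEq
    filter_upwards [Ioi_mem_nhds h] with y hy
    rw [abs_of_pos hy]; ring

theorem stmt15 (lam σ : ℝ) (hlam : 0 < lam) (hσ : 0 < σ)
    (h h' a : ℝ → ℝ)
    (hh : ∀ t, HasDerivAt h (h' t) t)
    (ha : ∀ t, HasDerivAt a (-(lam / 2) * a t + h' t) t) :
    let f : ℝ → ℝ := fun x => Real.sign x * σ ^ 2 * x ^ 2 / 4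
    let r : ℝ → ℝ := fun t => f (a t)
    ∀ t, 0 ≤ t →
      HasDerivAt r (-lam * r t + σ * Real.sqrt |r t| * h' t) t := by
  intro f r t _
  have hr : r = fun t => σ ^ 2 / 4 * (a t * |a t|) := by
    funext s
    show Real.sign (a s) * σ ^ 2 * (a s) ^ 2 / 4 = _
    rw [← sign_mul_sq (a s)]; ring
  have hd : HasDerivAt (fun s => a s * |a s|)
      (2 * |a t| * (-(lam / 2) * a t + h' t)) t :=
    (hasDerivAt_mul_abs (a t)).comp t (ha t)
  have hd2 : HasDerivAt r
      (σ ^ 2 / 4 * (2 * |a t| * (-(lam / 2) * a t + h' t))) t := by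
    rw [hr]; exact hd.const_mul _
  convert hd2 using 1
  have hrt : r t = σ ^ 2 / 4 * (a t * |a t|) := by rw [hr]
  have habs : |r t| = (σ * |a t| / 2) ^ 2 := by
    rw [hrt, abs_mul, abs_mul, abs_abs,
      abs_of_nonneg (by positivity : (0:ℝ) ≤ σ ^ 2 / 4)]
    ring
  have hsqrt : Real.sqrt |r t| = σ * |a t| / 2 := by
    rw [habs, Real.sqrt_sq (by positivity)]
  rw [hsqrt, hrt]
  ring
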